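/- Let d ≥ 1 and ε > 0. The Hessian of ρ_ε is positive semidefinite everywhere: for every z ∈ ℝ^d, ρ_ε is twice differentiable at z, and for every y ∈ ℝ^d the second-order (iterated Fréchet) derivative of ρ_ε at z applied to the pair (y, y) is nonnegative, i.e., ᵗy β_ε(z) y ≥ 0 where β_ε denotes the Hessian of ρ_ε. -/

import Mathlib

/-!
Write `ρ_ε z = φ ‖z‖`. The profile `φ` is `C¹` with derivative `φ' r = sin (π r / (2ε))` on `[0, ε]`
and `1` afterwards; `φ'` is nonnegative and nondecreasing on `[0, ∞)`, so `φ` is convex and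
nondecreasing there and `ρ_ε` is convex. Both branches of `φ'` have derivative `0` at `ε`, so
`φ'` is differentiable and the gradient `(φ' ‖z‖ / ‖z‖) z` of `ρ_ε` is differentiable away from
`0`. Near `0` it equals `c sinc (c ‖z‖) z` with `c = π / (2ε)`, a continuous multiple of `z`,
hence is differentiable at `0` too. Finally, the derivative of a convex function along a line is
monotone, so the second directional derivatives of a twice differentiable convex function are
nonnegative.
-/

noncomputable def rhoEps (d : ℕ) (ε : ℝ) (z : EuclideanSpace ℝ (Fin d)) : ℝ :=
  if ε ≤ ‖z‖ then ‖z‖ - (1 - 2 / Real.pi) * ε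
  else (2 * ε / Real.pi) * (1 - Real.cos (Real.pi * ‖z‖ / (2 * ε)))

open Real Set Filter Topology Asymptotics

theorem ConvexOn.nonneg_of_hasDerivAt_of_eventually_hasDerivAt {s : Set ℝ} {g g' : ℝ → ℝ}
    {x a : ℝ} (hg : ConvexOn ℝ s g) (hs : s ∈ 𝓝 x) (hg' : ∀ᶠ t in 𝓝 x, HasDerivAt g (g' t) t)
    (hg'' : HasDerivAt g' a x) : 0 ≤ a := by
  obtain ⟨δ, hδ, hball⟩ := Metric.mem_nhds_iff.1 (inter_mem hs hg')
  have hgb := hg.subset (fun y hy => (hball hy).1) (convex_ball x δ)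
  have hmono : MonotoneOn g' (Metric.ball x δ) := by
    intro t ht u hu htu
    rcases htu.eq_or_lt with rfl | htu
    · rfl
    exact (hgb.le_slope_of_hasDerivAt ht hu htu (hball ht).2).trans
      (hgb.slope_le_of_hasDerivAt ht hu htu (hball hu).2)
  have hacc : AccPt x (𝓟 (Metric.ball x δ)) :=
    ((PerfectSpace.univ_preperfect x (mem_univ x)).nhds_inter (Metric.ball_mem_nhds x hδ)).mono
      (principal_mono.2 inter_subset_left)
  exact hg''.hasDerivWithinAt.nonneg_of_monotoneOn hacc hmono

theorem ConvexOn.fderiv_fderiv_apply_self_nonneg {E : Type*} [NormedAddCommGroup E]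
    [NormedSpace ℝ E] {s : Set E} {f : E → ℝ} {z : E} (hf : ConvexOn ℝ s f) (hs : s ∈ 𝓝 z)
    (hdiff : ∀ᶠ x in 𝓝 z, DifferentiableAt ℝ f x)
    (hdiff2 : DifferentiableAt ℝ (fderiv ℝ f) z) (y : E) :
    0 ≤ fderiv ℝ (fderiv ℝ f) z y y := by
  let ℓ : ℝ →ᵃ[ℝ] E := AffineMap.lineMap z (z + y)
  have hℓ (t : ℝ) : HasDerivAt ℓ y t := by
    simpa using AffineMap.hasDerivAt_lineMap (a := z) (b := z + y) (x := t)
  have hℓ0 : ℓ 0 = z := AffineMap.lineMap_apply_zero z (z + y)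
  have hℓz : Tendsto ℓ (𝓝 0) (𝓝 z) := hℓ0 ▸ (hℓ 0).continuousAt.tendsto
  refine (hf.comp_affineMap ℓ).nonneg_of_hasDerivAt_of_eventually_hasDerivAt (hℓz hs)
    (g' := fun t => fderiv ℝ f (ℓ t) y) ?_ ?_
  · filter_upwards [hℓz hdiff] with t ht
    exact ht.hasFDerivAt.comp_hasDerivAt t (hℓ t)
  · have h2 : HasFDerivAt (fderiv ℝ f) (fderiv ℝ (fderiv ℝ f) z) (ℓ 0) := by
      rw [hℓ0]; exact hdiff2.hasFDerivAt
    have h := h2.comp_hasDerivAt 0 (hℓ 0)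
    exact (ContinuousLinearMap.apply ℝ ℝ y).hasFDerivAt.comp_hasDerivAt 0 h

theorem hasDerivAt_ite_le {f g f' g' : ℝ → ℝ} {a : ℝ} (hf : ∀ x, HasDerivAt f (f' x) x)
    (hg : ∀ x, HasDerivAt g (g' x) x) (hfg : f a = g a) (hfg' : f' a = g' a) (x : ℝ) :
    HasDerivAt (fun y => if a ≤ y then g y else f y) (if a ≤ x then g' x else f' x) x := by
  rcases lt_trichotomy x a with hx | rfl | hx
  · rw [if_neg hx.not_ge]
    refine (hf x).congr_of_eventuallyEq ?_
    filter_upwards [eventually_lt_nhds hx] with y hy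
    rw [if_neg hy.not_ge]
  · rw [if_pos le_rfl]
    have hIic : HasDerivWithinAt (fun y => if x ≤ y then g y else f y) (g' x) (Iic x) x := by
      refine hfg' ▸ (hf x).hasDerivWithinAt.congr (fun y hy => ?_) (by simp [hfg])
      rcases (mem_Iic.1 hy).eq_or_lt with rfl | hy
      · simp [hfg]
      · simp [hy.not_ge]
    have hIci : HasDerivWithinAt (fun y => if x ≤ y then g y else f y) (g' x) (Ici x) x :=
      (hg x).hasDerivWithinAt.congr (fun y hy => if_pos hy) (if_pos le_rfl)
    simpa using hIic.union hIci
  · rw [if_pos hx.le]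
    refine (hg x).congr_of_eventuallyEq ?_
    filter_upwards [eventually_gt_nhds hx] with y hy
    rw [if_pos hy.le]

section Radial

variable {E F : Type*} [NormedAddCommGroup E] [NormedAddCommGroup F]

theorem convexOn_univ_comp_norm [NormedSpace ℝ E] {φ : ℝ → ℝ} (hφ : ConvexOn ℝ (Ici 0) φ)
    (hφ' : MonotoneOn φ (Ici 0)) : ConvexOn ℝ univ fun x : E => φ ‖x‖ := by
  refine ⟨convex_univ, fun x _ y _ a b ha hb hab => ?_⟩
  calc φ ‖a • x + b • y‖ ≤ φ (a * ‖x‖ + b * ‖y‖) :=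
        hφ' (norm_nonneg _) (by positivity : 0 ≤ a * ‖x‖ + b * ‖y‖)
          (convexOn_univ_norm.2 trivial trivial ha hb hab)
    _ ≤ a • φ ‖x‖ + b • φ ‖y‖ := hφ.2 (norm_nonneg x) (norm_nonneg y) ha hb hab

theorem hasFDerivAt_comp_norm_zero [NormedSpace ℝ E] {φ : ℝ → ℝ} (hφ : HasDerivAt φ 0 0) :
    HasFDerivAt (fun x : E => φ ‖x‖) (0 : E →L[ℝ] ℝ) 0 := by
  rw [hasDerivAt_iff_isLittleO_nhds_zero] at hφ
  rw [hasFDerivAt_iff_isLittleO_nhds_zero]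
  have h := hφ.comp_tendsto (tendsto_norm_zero : Tendsto (fun x : E => ‖x‖) (𝓝 0) (𝓝 0))
  simpa [Function.comp_def] using (isLittleO_norm_right (g' := fun x : E => x)).1 h

theorem hasFDerivAt_smul_apply_zero [NormedSpace ℝ E] [NormedSpace ℝ F] {g : E → ℝ}
    (hg : ContinuousAt g 0) (L : E →L[ℝ] F) :
    HasFDerivAt (fun x => g x • L x) (g 0 • L) 0 := by
  rw [hasFDerivAt_iff_isLittleO_nhds_zero]
  have hg' : (fun x => g x - g 0) =o[𝓝 0] fun _ => (1 : ℝ) :=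
    (isLittleO_one_iff ℝ).2 (by simpa using hg.sub_const (g 0))
  simpa [sub_smul] using hg'.smul_isBigO (L.isBigO_id (𝓝 0))

variable [InnerProductSpace ℝ E]

theorem hasFDerivAt_norm {x : E} (hx : x ≠ 0) :
    HasFDerivAt (fun y : E => ‖y‖) (‖x‖⁻¹ • innerSL ℝ x) x := by
  have hx' : ‖x‖ ≠ 0 := norm_ne_zero_iff.2 hx
  have h := (hasStrictFDerivAt_norm_sq x).hasFDerivAt.sqrt (pow_ne_zero 2 hx')
  simp only [sqrt_sq (norm_nonneg _)] at h
  refine h.congr_fderiv ?_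
  rw [← Nat.cast_smul_eq_nsmul ℝ, Nat.cast_ofNat, smul_smul]
  congr 1
  field_simp

-- At `x = 0` both the coefficient (`_ / 0 = 0`) and `innerSL ℝ 0` vanish.
theorem hasFDerivAt_comp_norm {φ φ' : ℝ → ℝ} (hφ : ∀ r, HasDerivAt φ (φ' r) r) (hφ₀ : φ' 0 = 0)
    (x : E) : HasFDerivAt (fun y : E => φ ‖y‖) ((φ' ‖x‖ / ‖x‖) • innerSL ℝ x) x := by
  rcases eq_or_ne x 0 with rfl | hx
  · simpa using hasFDerivAt_comp_norm_zero ((hφ 0).congr_deriv hφ₀)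
  · refine ((hφ ‖x‖).comp_hasFDerivAt x (hasFDerivAt_norm hx)).congr_fderiv ?_
    rw [smul_smul, div_eq_mul_inv]

end Radial

-- `rhoEps d ε z = rhoProfile ε ‖z‖` holds definitionally.
noncomputable def rhoProfile (ε r : ℝ) : ℝ :=
  if ε ≤ r then r - (1 - 2 / π) * ε else (2 * ε / π) * (1 - cos (π * r / (2 * ε)))

-- `rhoEps d ε z = rhoProfile ε ‖z‖` holds definitionally.
noncomputable def rhoProfileDeriv (ε r : ℝ) : ℝ :=
  if ε ≤ r then 1 else sin (π * r / (2 * ε))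

section Profile

variable {ε : ℝ}

theorem hasDerivAt_rhoProfile (hε : 0 < ε) (r : ℝ) :
    HasDerivAt (rhoProfile ε) (rhoProfileDeriv ε r) r := by
  have harg : π * ε / (2 * ε) = π / 2 := by field_simp
  unfold rhoProfile rhoProfileDeriv
  refine hasDerivAt_ite_le (f' := fun x => sin (π * x / (2 * ε))) (g' := fun _ => 1)
    (fun x => ?_) (fun x => ?_) ?_ ?_ r
  · refine ((((hasDerivAt_id' x).const_mul π).div_const (2 * ε)).cos.const_sub 1).const_mul
      (2 * ε / π) |>.congr_deriv ?_
    field_simp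
  · simpa using (hasDerivAt_id x).sub_const ((1 - 2 / π) * ε)
  · simp only [harg, cos_pi_div_two]
    field_simp
    ring
  · simp [harg]

theorem differentiable_rhoProfileDeriv (hε : 0 < ε) : Differentiable ℝ (rhoProfileDeriv ε) := by
  have harg : π * ε / (2 * ε) = π / 2 := by field_simp
  unfold rhoProfileDeriv
  refine fun r => (hasDerivAt_ite_le (f' := fun x => cos (π * x / (2 * ε)) * (π / (2 * ε)))
    (g' := fun _ => 0) (fun x => ?_) (fun x => hasDerivAt_const x 1) ?_ ?_ r).differentiableAt
  · simpa using (((hasDerivAt_id' x).const_mul π).div_const (2 * ε)).sin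
  · simp [harg]
  · simp [harg]

theorem rhoProfileDeriv_zero (hε : 0 < ε) : rhoProfileDeriv ε 0 = 0 := by
  simp [rhoProfileDeriv, hε.not_ge]

theorem rhoProfileDeriv_div_self (hε : 0 < ε) {r : ℝ} (hr₀ : 0 < r) (hr : r < ε) :
    rhoProfileDeriv ε r / r = π / (2 * ε) * sinc (π * r / (2 * ε)) := by
  rw [rhoProfileDeriv, if_neg hr.not_ge, sinc_of_ne_zero (by positivity)]
  field_simp

theorem pi_mul_div_mem_Icc {r : ℝ} (hε : 0 < ε) (hr₀ : 0 ≤ r) (hr : r ≤ ε) :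
    π * r / (2 * ε) ∈ Icc (-(π / 2)) (π / 2) := by
  have hπ := pi_pos
  constructor
  · have : 0 ≤ π * r / (2 * ε) := by positivity
    linarith
  · rw [div_le_iff₀ (by positivity)]
    nlinarith

theorem rhoProfileDeriv_nonneg (hε : 0 < ε) {r : ℝ} (hr : 0 ≤ r) : 0 ≤ rhoProfileDeriv ε r := by
  unfold rhoProfileDeriv
  split_ifs with h
  · exact zero_le_one
  · exact sin_nonneg_of_nonneg_of_le_pi (by positivity)
      ((pi_mul_div_mem_Icc hε hr (not_le.1 h).le).2.trans (by linarith [pi_pos]))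

theorem monotoneOn_rhoProfileDeriv (hε : 0 < ε) : MonotoneOn (rhoProfileDeriv ε) (Ici 0) := by
  intro x hx y hy hxy
  by_cases hy' : ε ≤ y
  · rw [rhoProfileDeriv, rhoProfileDeriv, if_pos hy']
    split_ifs
    exacts [le_rfl, sin_le_one _]
  · have hx' : ¬ε ≤ x := fun h => hy' (h.trans hxy)
    rw [rhoProfileDeriv, rhoProfileDeriv, if_neg hx', if_neg hy']
    refine strictMonoOn_sin.monotoneOn (pi_mul_div_mem_Icc hε hx (not_le.1 hx').le)
      (pi_mul_div_mem_Icc hε hy (not_le.1 hy').le) ?_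
    gcongr

theorem deriv_rhoProfile (hε : 0 < ε) : deriv (rhoProfile ε) = rhoProfileDeriv ε :=
  funext fun r => (hasDerivAt_rhoProfile hε r).deriv

theorem differentiable_rhoProfile (hε : 0 < ε) : Differentiable ℝ (rhoProfile ε) :=
  fun r => (hasDerivAt_rhoProfile hε r).differentiableAt

theorem convexOn_rhoProfile (hε : 0 < ε) : ConvexOn ℝ (Ici 0) (rhoProfile ε) := by
  have hdiff := differentiable_rhoProfile hε
  refine MonotoneOn.convexOn_of_deriv (convex_Ici 0) hdiff.continuous.continuousOn
    hdiff.differentiableOn ?_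
  rw [interior_Ici, deriv_rhoProfile hε]
  exact (monotoneOn_rhoProfileDeriv hε).mono Ioi_subset_Ici_self

theorem monotoneOn_rhoProfile (hε : 0 < ε) : MonotoneOn (rhoProfile ε) (Ici 0) := by
  have hdiff := differentiable_rhoProfile hε
  refine monotoneOn_of_deriv_nonneg (convex_Ici 0) hdiff.continuous.continuousOn
    hdiff.differentiableOn fun x hx => ?_
  rw [interior_Ici] at hx
  rw [deriv_rhoProfile hε]
  exact rhoProfileDeriv_nonneg hε (le_of_lt hx)

end Profile

section RhoEps

variable {d : ℕ} {ε : ℝ}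

theorem hasFDerivAt_rhoEps (hε : 0 < ε) (z : EuclideanSpace ℝ (Fin d)) :
    HasFDerivAt (rhoEps d ε) ((rhoProfileDeriv ε ‖z‖ / ‖z‖) • innerSL ℝ z) z :=
  hasFDerivAt_comp_norm (φ := rhoProfile ε) (hasDerivAt_rhoProfile hε) (rhoProfileDeriv_zero hε) z

theorem differentiableAt_fderiv_rhoEps (hε : 0 < ε) (z : EuclideanSpace ℝ (Fin d)) :
    DifferentiableAt ℝ (fderiv ℝ (rhoEps d ε)) z := by
  rw [funext fun w => (hasFDerivAt_rhoEps hε w).fderiv]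
  rcases eq_or_ne z 0 with rfl | hz
  · have hg : ContinuousAt (fun w : EuclideanSpace ℝ (Fin d) =>
        π / (2 * ε) * sinc (π * ‖w‖ / (2 * ε))) 0 := by
      fun_prop
    refine (hasFDerivAt_smul_apply_zero hg (innerSL ℝ)).differentiableAt.congr_of_eventuallyEq ?_
    filter_upwards [Metric.ball_mem_nhds 0 hε] with w hw
    rcases eq_or_ne w 0 with rfl | hw₀
    · simp
    · rw [rhoProfileDeriv_div_self hε (norm_pos_iff.2 hw₀) (mem_ball_zero_iff.1 hw)]
  · have hnorm := (hasFDerivAt_norm hz).differentiableAt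
    have hφ : DifferentiableAt ℝ (fun w => rhoProfileDeriv ε ‖w‖) z :=
      (differentiable_rhoProfileDeriv hε _).comp z hnorm
    simp_rw [div_eq_mul_inv]
    exact (hφ.mul (hnorm.inv (norm_ne_zero_iff.2 hz))).smul (innerSL ℝ).differentiableAt

theorem convexOn_rhoEps (hε : 0 < ε) : ConvexOn ℝ univ (rhoEps d ε) :=
  convexOn_univ_comp_norm (convexOn_rhoProfile hε) (monotoneOn_rhoProfile hε)

end RhoEps

theorem rhoEps_hessian_posSemidef_general (d : ℕ) (ε : ℝ) (hε : 0 < ε)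
    (z : EuclideanSpace ℝ (Fin d)) :
    DifferentiableAt ℝ (rhoEps d ε) z ∧
      DifferentiableAt ℝ (fderiv ℝ (rhoEps d ε)) z ∧
      ∀ y : EuclideanSpace ℝ (Fin d),
        0 ≤ fderiv ℝ (fderiv ℝ (rhoEps d ε)) z y y := by
  have hdiff : ∀ w, DifferentiableAt ℝ (rhoEps d ε) w :=
    fun w => (hasFDerivAt_rhoEps hε w).differentiableAt
  have hdiff2 := differentiableAt_fderiv_rhoEps hε z
  exact ⟨hdiff z, hdiff2, (convexOn_rhoEps hε).fderiv_fderiv_apply_self_nonneg univ_mem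
    (Eventually.of_forall hdiff) hdiff2⟩

/-- the Hessian of `ρ_ε` is positive semidefinite everywhere:
`ρ_ε` is twice differentiable at every `z`, and the second-order (iterated Fréchet)
derivative of `ρ_ε` at `z` applied to `(y, y)` is nonnegative for every `y`. -/
theorem rhoEps_hessian_posSemidef (d : ℕ) (hd : 1 ≤ d) (ε : ℝ) (hε : 0 < ε)
    (z : EuclideanSpace ℝ (Fin d)) :
    DifferentiableAt ℝ (rhoEps d ε) z ∧
      DifferentiableAt ℝ (fderiv ℝ (rhoEps d ε)) z ∧
      ∀ y : EuclideanSpace ℝ (Fin d),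
        0 ≤ fderiv ℝ (fderiv ℝ (rhoEps d ε)) z y y :=
  rhoEps_hessian_posSemidef_general d ε hε z
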